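/- arXiv:1405.1933 — 4 statements merged into one kernel-verified Lean document; each statement's English description precedes it below -/
import Mathlib

section
/- For every λ ∈ ℂ with |λ| ≤ 5 and every ξ ∈ ℂ, the sequence (2^{−n} log⁺|Q_λ^{∘n}(ξ)|)_{n≥0} converges to a limit G_λ(ξ) which satisfies log|ξ| − log 6 ≤ G_λ(ξ) ≤ max(log 11, log|ξ| + log(11/6)). -/
open MeasureTheory Filter

/-- The quadratic polynomial `Q_λ(z) = λ z + z²`. -/
noncomputable def Q (lam : ℂ) (z : ℂ) : ℂ := lam * z + z ^ 2

/-- The filled Julia set of `Q_λ`: points with bounded forward orbit. -/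
def filledJulia (lam : ℂ) : Set ℂ :=
  {z : ℂ | ∃ M : ℝ, ∀ n : ℕ, ‖(Q lam)^[n] z‖ ≤ M}

/-- Planar Lebesgue area of a subset of `ℂ`, as a real number. -/
noncomputable def area (s : Set ℂ) : ℝ := (volume s).toReal

/-- The Green function `G_λ(z) = limsup_n 2^{-n} log⁺ |Q_λ^{∘n}(z)|`. -/
noncomputable def green (lam : ℂ) (z : ℂ) : ℝ :=
  Filter.limsup
    (fun n : ℕ => (2 : ℝ)⁻¹ ^ n * max (Real.log (‖(Q lam)^[n] z‖)) 0)
    Filter.atTop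

/-- A Böttcher parametrization for `Q_λ` on `{|w| > 1}`. -/
def IsBottcher (lam : ℂ) (ψ : ℂ → ℂ) (b : ℕ → ℂ) : Prop :=
  Set.InjOn ψ {w : ℂ | 1 < ‖w‖} ∧
  DifferentiableOn ℂ ψ {w : ℂ | 1 < ‖w‖} ∧
  (∀ w : ℂ, 1 < ‖w‖ →
    HasSum (fun k : ℕ => b (k + 1) / w ^ (k + 1)) (ψ w - w)) ∧
  (∀ w : ℂ, 1 < ‖w‖ → ψ (w ^ 2) = Q lam (ψ w)) ∧
  ψ '' {w : ℂ | 1 < ‖w‖} = (filledJulia lam)ᶜ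

/-! With `t z = log (max ‖z‖ 6)`, the estimates `‖z‖ (‖z‖ - 5) ≤ ‖Q_λ z‖ ≤ ‖z‖ (‖z‖ + 5)`
give `2 t z - log 6 ≤ t (Q_λ z) ≤ 2 t z + log (11/6)`. Along the orbit, `2⁻ⁿ (tₙ - log 6)`
therefore increases and `2⁻ⁿ (tₙ + log (11/6))` decreases; they squeeze a common limit between
`t ξ - log 6` and `t ξ + log (11/6)`, and `2⁻ⁿ log⁺ ‖Q_λ^{∘n} ξ‖` is within `2⁻ⁿ log 6` of
`2⁻ⁿ tₙ`. -/

open Real Topology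

lemma Real.log_max_of_nonneg {x c : ℝ} (hx : 0 ≤ x) (hc : 1 ≤ c) :
    log (max x c) = max (log x) (log c) := by
  rcases le_total x c with h | h
  · rw [max_eq_right h]
    rcases hx.eq_or_lt with rfl | hx
    · simpa using log_nonneg hc
    · exact (max_eq_right (log_le_log hx h)).symm
  · rw [max_eq_left h, max_eq_left (log_le_log (by linarith) h)]

lemma exists_tendsto_inv_pow_mul_of_bounded_defect {d A B : ℝ} (hd : 1 < d) {t : ℕ → ℝ}
    (hlo : ∀ n, d * t n - A ≤ t (n + 1)) (hhi : ∀ n, t (n + 1) ≤ d * t n + B) :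
    ∃ L, Tendsto (fun n => d⁻¹ ^ n * t n) atTop (𝓝 L) ∧
      t 0 - A / (d - 1) ≤ L ∧ L ≤ t 0 + B / (d - 1) := by
  set a := A / (d - 1)
  set b := B / (d - 1)
  have hd₀ : 0 < d := by linarith
  have ha : (d - 1) * a = A := mul_div_cancel₀ A (by linarith)
  have hb : (d - 1) * b = B := mul_div_cancel₀ B (by linarith)
  have hab : 0 ≤ a + b := by
    have : 0 ≤ (d - 1) * (a + b) := by linarith [hlo 0, hhi 0]
    exact (mul_nonneg_iff_of_pos_left (by linarith)).mp this
  have hp : Monotone fun n => d⁻¹ ^ n * (t n - a) := by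
    refine monotone_nat_of_le_succ fun n => ?_
    rw [pow_succ, mul_assoc]
    gcongr
    rw [le_inv_mul_iff₀ hd₀]
    linarith [hlo n]
  have hq : Antitone fun n => d⁻¹ ^ n * (t n + b) := by
    refine antitone_nat_of_succ_le fun n => ?_
    rw [pow_succ, mul_assoc]
    gcongr
    rw [inv_mul_le_iff₀ hd₀]
    linarith [hhi n]
  have hgeom : Tendsto (fun n => d⁻¹ ^ n) atTop (𝓝 0) :=
    tendsto_pow_atTop_nhds_zero_of_lt_one (by positivity) (inv_lt_one_of_one_lt₀ hd)
  have hpq : ∀ n, d⁻¹ ^ n * (t n - a) ≤ d⁻¹ ^ n * (t n + b) := fun n => by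
    gcongr; linarith
  obtain ⟨L, hpL⟩ : ∃ L, Tendsto (fun n => d⁻¹ ^ n * (t n - a)) atTop (𝓝 L) :=
    ⟨_, tendsto_atTop_ciSup hp ⟨_, Set.forall_mem_range.2 fun n => (hpq n).trans (hq n.zero_le)⟩⟩
  have htL : Tendsto (fun n => d⁻¹ ^ n * t n) atTop (𝓝 L) := by
    simpa [mul_sub] using hpL.add (hgeom.mul_const a)
  have hqL : Tendsto (fun n => d⁻¹ ^ n * (t n + b)) atTop (𝓝 L) := by
    simpa [mul_add] using htL.add (hgeom.mul_const b)
  refine ⟨L, htL, ?_, ?_⟩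
  · simpa using hp.ge_of_tendsto hpL 0
  · simpa using hq.le_of_tendsto hqL 0

lemma norm_Q (lam z : ℂ) : ‖Q lam z‖ = ‖z‖ * ‖z + lam‖ := by
  rw [show Q lam z = z * (z + lam) by unfold Q; ring, norm_mul]

lemma max_norm_Q_le {lam : ℂ} (hlam : ‖lam‖ ≤ 5) (z : ℂ) :
    max ‖Q lam z‖ 6 ≤ 11 / 6 * max ‖z‖ 6 ^ 2 := by
  have hz : ‖z‖ ≤ max ‖z‖ 6 := le_max_left _ _
  have h6 : 6 ≤ max ‖z‖ 6 := le_max_right _ _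
  have hQ : ‖Q lam z‖ ≤ ‖z‖ * (‖z‖ + 5) := by
    rw [norm_Q]
    gcongr
    exact (norm_add_le _ _).trans (by linarith)
  refine max_le (hQ.trans ?_) (by nlinarith)
  nlinarith [norm_nonneg z]

lemma max_norm_sq_div_six_le {lam : ℂ} (hlam : ‖lam‖ ≤ 5) (z : ℂ) :
    max ‖z‖ 6 ^ 2 / 6 ≤ max ‖Q lam z‖ 6 := by
  rcases le_total ‖z‖ 6 with hz | hz
  · rw [max_eq_right hz]
    norm_num
  · have hQ : ‖z‖ * (‖z‖ - 5) ≤ ‖Q lam z‖ := by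
      rw [norm_Q]
      gcongr
      linarith [norm_sub_le_norm_add z lam]
    rw [max_eq_left hz]
    exact le_max_of_le_left (by nlinarith)

lemma log_max_norm_Q_le {lam : ℂ} (hlam : ‖lam‖ ≤ 5) (z : ℂ) :
    log (max ‖Q lam z‖ 6) ≤ 2 * log (max ‖z‖ 6) + log (11 / 6) := by
  have h6 : (6 : ℝ) ≤ max ‖z‖ 6 := le_max_right _ _
  calc log (max ‖Q lam z‖ 6) ≤ log (11 / 6 * max ‖z‖ 6 ^ 2) :=
        log_le_log (by positivity) (max_norm_Q_le hlam z)
    _ = 2 * log (max ‖z‖ 6) + log (11 / 6) := by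
        rw [log_mul (by norm_num) (by positivity), log_pow]; push_cast; ring

lemma two_mul_log_max_norm_sub_le {lam : ℂ} (hlam : ‖lam‖ ≤ 5) (z : ℂ) :
    2 * log (max ‖z‖ 6) - log 6 ≤ log (max ‖Q lam z‖ 6) := by
  have h6 : (6 : ℝ) ≤ max ‖z‖ 6 := le_max_right _ _
  calc 2 * log (max ‖z‖ 6) - log 6 = log (max ‖z‖ 6 ^ 2 / 6) := by
        rw [log_div (by positivity) (by norm_num), log_pow]; push_cast; ring
    _ ≤ log (max ‖Q lam z‖ 6) := log_le_log (by positivity) (max_norm_sq_div_six_le hlam z)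

lemma abs_log_max_six_sub_max_log_zero_le {x : ℝ} (hx : 0 ≤ x) :
    |log (max x 6) - max (log x) 0| ≤ log 6 := by
  rw [log_max_of_nonneg hx (by norm_num)]
  refine (abs_max_sub_max_le_max _ _ _ _).trans ?_
  simpa using (abs_of_nonneg (log_nonneg (by norm_num : (1 : ℝ) ≤ 6))).le

theorem stmt4 (lam : ℂ) (hlam : ‖lam‖ ≤ 5) (ξ : ℂ) :
    Tendsto
      (fun n : ℕ => (2 : ℝ)⁻¹ ^ n * max (Real.log (‖(Q lam)^[n] ξ‖)) 0)
      atTop (nhds (green lam ξ)) ∧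
    Real.log (‖ξ‖) - Real.log 6 ≤ green lam ξ ∧
    green lam ξ ≤ max (Real.log 11) (Real.log (‖ξ‖) + Real.log (11 / 6)) := by
  set t : ℕ → ℝ := fun n => log (max ‖(Q lam)^[n] ξ‖ 6)
  have hiter (n : ℕ) : (Q lam)^[n + 1] ξ = Q lam ((Q lam)^[n] ξ) :=
    Function.iterate_succ_apply' _ _ _
  obtain ⟨L, htL, hL_ge, hL_le⟩ :=
    exists_tendsto_inv_pow_mul_of_bounded_defect one_lt_two (t := t)
      (fun n => by simpa [t, hiter] using two_mul_log_max_norm_sub_le hlam _)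
      (fun n => by simpa [t, hiter] using log_max_norm_Q_le hlam _)
  have hL : Tendsto (fun n : ℕ => (2 : ℝ)⁻¹ ^ n * max (log ‖(Q lam)^[n] ξ‖) 0) atTop (𝓝 L) := by
    have hgeom : Tendsto (fun n : ℕ => (2 : ℝ)⁻¹ ^ n * log 6) atTop (𝓝 0) := by
      simpa using (tendsto_pow_atTop_nhds_zero_of_lt_one (by norm_num : (0 : ℝ) ≤ 2⁻¹)
        (by norm_num)).mul_const (log 6)
    refine htL.congr_dist (squeeze_zero (fun _ => dist_nonneg) (fun n => ?_) hgeom)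
    rw [dist_eq, ← mul_sub, abs_mul, abs_of_pos (by positivity)]
    gcongr
    exact abs_log_max_six_sub_max_log_zero_le (norm_nonneg _)
  have ht0 : t 0 = max (log ‖ξ‖) (log 6) := log_max_of_nonneg (norm_nonneg ξ) (by norm_num)
  have h11 : log 6 + log (11 / 6) = log 11 := by
    rw [← log_mul (by norm_num) (by norm_num)]; norm_num
  norm_num [ht0] at hL_ge hL_le
  rw [show green lam ξ = L from hL.limsup_eq]
  refine ⟨hL, by linarith [hL_ge.1], ?_⟩
  rwa [← max_add_add_right, h11, max_comm] at hL_le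
end

section
/- Let R > 6, g > 0, and λ ∈ ℂ with |λ| ≤ 5. Let m = ⌈(log log(11R/6) − log g)/log 2⌉ as an integer, and suppose m ≥ 0. Then for every z ∈ ℂ with |Q_λ^{∘m}(z)| ≤ R one has G_λ(z) ≤ g. -/
open MeasureTheory Filter

/-!
Once an orbit point `w` has been reached, the quantity `‖w‖ + c` (with `‖λ‖ ≤ 2c`, `c ≥ 1`) at
most squares under each further application of `Q_λ`, so `2^{-n} log⁺ ‖Q_λ^{∘n} z‖` stays below
`log (‖Q_λ^{∘m} z‖ + c) / 2^m` for all `n ≥ m`. With `c = 5/2` and `‖Q_λ^{∘m} z‖ ≤ R` this is at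
most `log (11R/6) / 2^m`, and the choice of `m` makes that at most `g`.
-/

open Real

theorem norm_Q_add_le_sq {lam : ℂ} {c : ℝ} (hlam : ‖lam‖ ≤ 2 * c) (hc : 1 ≤ c) (w : ℂ) :
    ‖Q lam w‖ + c ≤ (‖w‖ + c) ^ 2 := by
  have hQ : ‖Q lam w‖ ≤ ‖lam‖ * ‖w‖ + ‖w‖ ^ 2 := by
    rw [← norm_mul, ← norm_pow]
    exact norm_add_le _ _
  nlinarith [mul_le_mul_of_nonneg_right hlam (norm_nonneg w)]

theorem norm_iterate_Q_add_le {lam : ℂ} {c : ℝ} (hlam : ‖lam‖ ≤ 2 * c) (hc : 1 ≤ c)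
    (w : ℂ) (k : ℕ) : ‖(Q lam)^[k] w‖ + c ≤ (‖w‖ + c) ^ 2 ^ k := by
  induction k with
  | zero => simp
  | succ k ih =>
    calc ‖(Q lam)^[k + 1] w‖ + c
        = ‖Q lam ((Q lam)^[k] w)‖ + c := by rw [Function.iterate_succ_apply']
      _ ≤ (‖(Q lam)^[k] w‖ + c) ^ 2 := norm_Q_add_le_sq hlam hc _
      _ ≤ ((‖w‖ + c) ^ 2 ^ k) ^ 2 := by gcongr
      _ = (‖w‖ + c) ^ 2 ^ (k + 1) := by rw [← pow_mul, pow_succ]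

theorem green_le_log_norm_iterate_add_div {lam : ℂ} {c : ℝ} (hlam : ‖lam‖ ≤ 2 * c)
    (hc : 1 ≤ c) (z : ℂ) (M : ℕ) :
    green lam z ≤ log (‖(Q lam)^[M] z‖ + c) / 2 ^ M := by
  set w := (Q lam)^[M] z
  have hw : 1 ≤ ‖w‖ + c := by linarith [norm_nonneg w]
  apply limsup_le_of_le (isCoboundedUnder_le_of_le atTop fun n => by positivity)
  filter_upwards [eventually_ge_atTop M] with n hn
  obtain ⟨k, rfl⟩ := Nat.exists_eq_add_of_le hn
  have horbit : (Q lam)^[M + k] z = (Q lam)^[k] w := by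
    rw [add_comm, Function.iterate_add_apply]
  have hlog : max (log ‖(Q lam)^[M + k] z‖) 0 ≤ 2 ^ k * log (‖w‖ + c) := by
    rw [max_comm, ← posLog_apply, horbit]
    calc log⁺ ‖(Q lam)^[k] w‖
        ≤ log⁺ ((‖w‖ + c) ^ 2 ^ k) :=
          posLog_le_posLog (norm_nonneg _) (by linarith [norm_iterate_Q_add_le hlam hc w k])
      _ = 2 ^ k * log (‖w‖ + c) := by
          rw [posLog_pow, posLog_eq_log (by rwa [abs_of_nonneg (by linarith)])]
          push_cast; ring
  calc (2 : ℝ)⁻¹ ^ (M + k) * max (log ‖(Q lam)^[M + k] z‖) 0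
      ≤ (2 : ℝ)⁻¹ ^ (M + k) * (2 ^ k * log (‖w‖ + c)) := by gcongr
    _ = log (‖w‖ + c) / 2 ^ M := by rw [inv_pow, pow_add]; field_simp

theorem log_div_two_pow_le {C g : ℝ} (hC : 1 < C) (hg : 0 < g) {n : ℕ}
    (hn : (log (log C) - log g) / log 2 ≤ n) : log C / 2 ^ n ≤ g := by
  have hlogC : 0 < log C := log_pos hC
  have hexp : log (log C) ≤ log g + n * log 2 := by
    rw [div_le_iff₀ (log_pos one_lt_two)] at hn
    linarith
  rw [div_le_iff₀ (by positivity)]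
  calc log C = exp (log (log C)) := (exp_log hlogC).symm
    _ ≤ exp (log g + n * log 2) := exp_le_exp.mpr hexp
    _ = g * 2 ^ n := by rw [exp_add, exp_log hg, exp_nat_mul, exp_log two_pos]

theorem stmt5 (R g : ℝ) (hR : 6 < R) (hg : 0 < g) (lam : ℂ) (hlam : ‖lam‖ ≤ 5)
    (m : ℤ)
    (hm : m = ⌈(Real.log (Real.log (11 * R / 6)) - Real.log g) / Real.log 2⌉)
    (hm0 : 0 ≤ m) :
    ∀ z : ℂ, ‖(Q lam)^[m.toNat] z‖ ≤ R → green lam z ≤ g := by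
  intro z hz
  have hmceil : (log (log (11 * R / 6)) - log g) / log 2 ≤ (m.toNat : ℝ) := by
    have hcast : (m.toNat : ℝ) = m := by exact_mod_cast Int.toNat_of_nonneg hm0
    rw [hcast, hm]
    exact Int.le_ceil _
  calc green lam z ≤ log (‖(Q lam)^[m.toNat] z‖ + 5 / 2) / 2 ^ m.toNat :=
        green_le_log_norm_iterate_add_div (by linarith) (by norm_num) z m.toNat
    _ ≤ log (11 * R / 6) / 2 ^ m.toNat := by
        gcongr
        linarith
    _ ≤ g := log_div_two_pow_le (by linarith) hg hmceil
end

section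
/- For every λ₀ ∈ ℂ and every ε > 0 there exists δ > 0 such that for all λ ∈ ℂ with |λ − λ₀| < δ one has Area(K_λ) ≤ Area(K_{λ₀}) + ε. (That is, limsup_{λ→λ₀} Area(K_λ) ≤ Area(K_{λ₀}); the map λ ↦ Area(K_λ) is upper semicontinuous.) -/
open MeasureTheory Filter

/-!
A point whose orbit under `Q_λ` ever leaves the disc of radius `|λ| + 2` escapes to infinity, so
for `|λ| ≤ r` the filled Julia set `K_λ` is the fibre over `λ` of the set of pairs `(λ, z)` whose
orbit stays in the disc of radius `r + 2`. That set is closed and bounded, hence compact, and the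
fibres of a compact set vary upper semicontinuously: every open `U ⊇ K_{λ₀}` contains `K_λ` for
`λ` near `λ₀`. Outer regularity of Lebesgue measure then turns this into upper semicontinuity of
the area.
-/

open Topology

section FibreMeasure

variable {X Y : Type*} [TopologicalSpace X] [T2Space X] [TopologicalSpace Y]

theorem IsCompact.eventually_preimage_prodMk_subset {S : Set (X × Y)} (hS : IsCompact S)
    {U : Set Y} (hU : IsOpen U) {x₀ : X} (h₀ : Prod.mk x₀ ⁻¹' S ⊆ U) :
    ∀ᶠ x in 𝓝 x₀, Prod.mk x ⁻¹' S ⊆ U := by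
  set T := S ∩ Prod.snd ⁻¹' Uᶜ
  have hT : IsCompact T := hS.inter_right (hU.isClosed_compl.preimage continuous_snd)
  have hx₀ : x₀ ∉ Prod.fst '' T := by
    rintro ⟨⟨x, y⟩, ⟨hxyS, hyU⟩, rfl⟩
    exact hyU (h₀ hxyS)
  filter_upwards [(hT.image continuous_fst).isClosed.isOpen_compl.mem_nhds hx₀]
    with x hx y hy
  by_contra hyU
  exact hx ⟨(x, y), ⟨hy, hyU⟩, rfl⟩

theorem IsCompact.eventually_measure_preimage_prodMk_lt [MeasurableSpace Y] (μ : Measure Y)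
    [μ.OuterRegular] {S : Set (X × Y)} (hS : IsCompact S) {x₀ : X} {r : ENNReal}
    (hr : μ (Prod.mk x₀ ⁻¹' S) < r) :
    ∀ᶠ x in 𝓝 x₀, μ (Prod.mk x ⁻¹' S) < r := by
  obtain ⟨U, hSU, hU, hμU⟩ := Set.exists_isOpen_lt_of_lt _ r hr
  filter_upwards [hS.eventually_preimage_prodMk_subset hU hSU] with x hx
  exact (measure_mono hx).trans_lt hμU

end FibreMeasure

section Escape

variable {lam : ℂ} {R : ℝ}

theorem two_mul_norm_le_norm_Q (hR : ‖lam‖ + 2 ≤ R) {w : ℂ} (hw : R < ‖w‖) :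
    2 * ‖w‖ ≤ ‖Q lam w‖ := by
  have hsum : 2 ≤ ‖lam + w‖ := by
    have := norm_sub_norm_le w (-lam)
    rw [sub_neg_eq_add, norm_neg, add_comm w] at this
    linarith
  calc 2 * ‖w‖ ≤ ‖w‖ * ‖lam + w‖ := by nlinarith [norm_nonneg w]
    _ = ‖Q lam w‖ := by rw [← norm_mul, Q]; ring_nf

theorem two_pow_mul_norm_le_norm_iterate_Q (hR : ‖lam‖ + 2 ≤ R) {w : ℂ} (hw : R < ‖w‖)
    (k : ℕ) : 2 ^ k * ‖w‖ ≤ ‖(Q lam)^[k] w‖ := by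
  induction k with
  | zero => simp
  | succ k ih =>
    have hk : R < ‖(Q lam)^[k] w‖ :=
      hw.trans_le (le_mul_of_one_le_left (norm_nonneg w) (one_le_pow₀ one_le_two) |>.trans ih)
    rw [Function.iterate_succ_apply', pow_succ']
    calc 2 * 2 ^ k * ‖w‖ ≤ 2 * ‖(Q lam)^[k] w‖ := by rw [mul_assoc]; gcongr
      _ ≤ _ := two_mul_norm_le_norm_Q hR hk

theorem norm_iterate_Q_le_of_mem_filledJulia (hR : ‖lam‖ + 2 ≤ R) {z : ℂ}
    (hz : z ∈ filledJulia lam) (m : ℕ) : ‖(Q lam)^[m] z‖ ≤ R := by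
  obtain ⟨M, hM⟩ := hz
  by_contra! hesc
  obtain ⟨k, hk⟩ := pow_unbounded_of_one_lt M one_lt_two
  have hw : 1 ≤ ‖(Q lam)^[m] z‖ := by linarith [norm_nonneg lam]
  have := two_pow_mul_norm_le_norm_iterate_Q hR hesc k
  rw [← Function.iterate_add_apply] at this
  nlinarith [hM (k + m), pow_pos (two_pos : (0 : ℝ) < 2) k]

theorem filledJulia_eq_setOf_forall_norm_iterate_le (hR : ‖lam‖ + 2 ≤ R) :
    filledJulia lam = {z | ∀ n, ‖(Q lam)^[n] z‖ ≤ R} :=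
  Set.ext fun _ => ⟨norm_iterate_Q_le_of_mem_filledJulia hR, fun h => ⟨R, h⟩⟩

end Escape

def filledJuliaFamily (r : ℝ) : Set (ℂ × ℂ) :=
  {p | ‖p.1‖ ≤ r ∧ ∀ n, ‖(Q p.1)^[n] p.2‖ ≤ r + 2}

theorem continuous_iterate_Q (n : ℕ) : Continuous fun p : ℂ × ℂ => (Q p.1)^[n] p.2 := by
  induction n with
  | zero => exact continuous_snd
  | succ n ih =>
    simp only [Function.iterate_succ_apply', Q]
    fun_prop

theorem isCompact_filledJuliaFamily (r : ℝ) : IsCompact (filledJuliaFamily r) := by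
  have hclosed : IsClosed (filledJuliaFamily r) := by
    simp only [filledJuliaFamily, Set.ofPred_and, Set.ofPred_forall]
    exact (isClosed_le (continuous_norm.comp continuous_fst) continuous_const).inter <|
      isClosed_iInter fun n =>
        isClosed_le (continuous_norm.comp (continuous_iterate_Q n)) continuous_const
  refine ((isCompact_closedBall (0 : ℂ) r).prod (isCompact_closedBall (0 : ℂ) (r + 2)))
    |>.of_isClosed_subset hclosed fun p hp => ⟨?_, ?_⟩
  · simpa using hp.1
  · simpa using hp.2 0

theorem preimage_prodMk_filledJuliaFamily {r : ℝ} {lam : ℂ} (hlam : ‖lam‖ ≤ r) :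
    Prod.mk lam ⁻¹' filledJuliaFamily r = filledJulia lam := by
  rw [filledJulia_eq_setOf_forall_norm_iterate_le (by linarith : ‖lam‖ + 2 ≤ r + 2)]
  ext z
  simp [filledJuliaFamily, hlam]

theorem stmt14 (lam₀ : ℂ) (ε : ℝ) (hε : 0 < ε) :
    ∃ δ > (0 : ℝ), ∀ lam : ℂ, ‖lam - lam₀‖ < δ →
      area (filledJulia lam) ≤ area (filledJulia lam₀) + ε := by
  set r := ‖lam₀‖ + 1
  have hfibre : ∀ lam : ℂ, ‖lam - lam₀‖ < 1 →
      Prod.mk lam ⁻¹' filledJuliaFamily r = filledJulia lam := fun lam hlam =>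
    preimage_prodMk_filledJuliaFamily <| by
      linarith [norm_le_norm_add_norm_sub' lam lam₀]
  have hbounded : Bornology.IsBounded (filledJulia lam₀) :=
    (Metric.isBounded_closedBall (x := 0) (r := ‖lam₀‖ + 2)).subset fun z hz => by
      simpa using norm_iterate_Q_le_of_mem_filledJulia le_rfl hz 0
  have hfinite : volume (filledJulia lam₀) ≠ ⊤ := hbounded.measure_lt_top.ne
  have harea : 0 ≤ area (filledJulia lam₀) := ENNReal.toReal_nonneg
  have hlt : volume (Prod.mk lam₀ ⁻¹' filledJuliaFamily r)
      < ENNReal.ofReal (area (filledJulia lam₀) + ε) := by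
    rw [hfibre lam₀ (by simp), ← ENNReal.ofReal_toReal hfinite]
    exact (ENNReal.ofReal_lt_ofReal_iff (by linarith)).2 (lt_add_of_pos_right _ hε)
  obtain ⟨δ, hδ, hnear⟩ := Metric.eventually_nhds_iff.1
    ((isCompact_filledJuliaFamily r).eventually_measure_preimage_prodMk_lt volume hlt)
  refine ⟨min δ 1, lt_min hδ one_pos, fun lam hlam => ?_⟩
  have hlam : dist lam lam₀ < min δ 1 := by rwa [dist_eq_norm]
  have := hnear (hlam.trans_le (min_le_left _ _))
  rw [hfibre lam (by simpa [dist_eq_norm] using hlam.trans_le (min_le_right _ _))] at this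
  exact ENNReal.toReal_le_of_le_ofReal (by linarith) this.le
end

section
/- Let Q(z) = z + z² and let K be its filled Julia set. There exist a nonempty open set Ω contained in the interior of K with Q(Ω) ⊆ Ω, and a holomorphic map Φ : interior(K) → ℂ, such that: Φ is injective on Ω; Φ(Q(z)) = Φ(z) + 1 for every z in the interior of K; for every z in the interior of K there exists n ∈ ℕ with Q^{∘n}(z) ∈ Ω; and Φ(interior(K)) = ℂ. -/
open MeasureTheory Filter

/-!
In the coordinate `w = -1/z`, the map `Q(z) = z + z²` becomes `w ↦ w + 1 + 1/(w - 1)`, a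
perturbed translation of the half-plane `Re w > 100`; its preimage is the petal `Ω`. Along an
orbit there `w_n = w + n + ∑_{k<n} 1/(w_k - 1)` with `w_k ≈ k`, so `w_n - n - H_n` (with `H_n` the
harmonic numbers) converges to `w + g(w)`, where `g` is holomorphic and `1/20`-Lipschitz. Hence
`Φ(z) = lim (-1/Qⁿ(z) - n - H_n)` is injective on `Ω`, and by the contraction principle its
values on `Ω` include `c + n` for every `c` and large `n ∈ ℕ`.

Every interior orbit reaches `Ω`: by the Cauchy estimate the derivatives `∏ |Q'(z_k)|` of the
iterates stay bounded, so either some `|Q'(z_k)| = |1 + 2 z_k| ≤ 1`, which means `Re(-1/z_k) ≥ 1`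
and the orbit climbs by at least `1` per step, or `|Q'(z_k)| → 1`, which forces `z_k` close to the
fixed point `0` or to its preimage `-1` and then into `|z| ≤ 1/100`, where it climbs by `1/2`.
The functional equation `Φ ∘ Q = Φ + 1` then defines `Φ` on the whole interior, and since `Q` is
onto and the interior of `K` is completely invariant, `Φ` maps it onto `ℂ`.
-/

open Metric Set
open scoped NNReal Topology

theorem exists_lt_of_forall_add_le_succ {x : ℕ → ℝ} {δ : ℝ} (hδ : 0 < δ)
    (h : ∀ n, x n + δ ≤ x (n + 1)) (c : ℝ) : ∃ n, c < x n := by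
  have hlin : ∀ n : ℕ, x 0 + n * δ ≤ x n := by
    intro n
    induction n with
    | zero => simp
    | succ n ih => push_cast; linarith [h n]
  obtain ⟨n, hn⟩ := exists_nat_gt ((c - x 0) / δ)
  refine ⟨n, ?_⟩
  rw [div_lt_iff₀ hδ] at hn
  linarith [hlin n]

theorem Finset.one_add_sum_le_prod_one_add {ι : Type*} (s : Finset ι) {f : ι → ℝ}
    (hf : ∀ i ∈ s, 0 ≤ f i) : 1 + ∑ i ∈ s, f i ≤ ∏ i ∈ s, (1 + f i) := by
  classical
  induction s using Finset.induction_on with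
  | empty => simp
  | insert a s ha ih =>
    rw [Finset.sum_insert ha, Finset.prod_insert ha]
    have hfa := hf a (Finset.mem_insert_self a s)
    have ih := ih fun i hi => hf i (Finset.mem_insert_of_mem hi)
    have hsum : 0 ≤ ∑ i ∈ s, f i := Finset.sum_nonneg fun i hi => hf i (Finset.mem_insert_of_mem hi)
    nlinarith

theorem sum_range_one_div_mul_le {a : ℝ} (ha : 0 < a) (n : ℕ) :
    ∑ k ∈ Finset.range n, 1 / ((k + a) * (k + a + 1)) ≤ 1 / a := by
  have htel : ∀ k : ℕ, 1 / ((k + a) * (k + a + 1)) = 1 / (k + a) - 1 / ((k + 1 : ℕ) + a) := by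
    intro k
    have : (0 : ℝ) < k + a := by positivity
    push_cast
    field_simp
    ring
  simp_rw [htel]
  rw [Finset.sum_range_sub' (fun k : ℕ => 1 / ((k : ℝ) + a))]
  simp only [CharP.cast_eq_zero, zero_add, sub_le_self_iff]
  positivity

theorem harmonic_le_two_mul_sqrt (n : ℕ) : (harmonic n : ℝ) ≤ 2 * √n := by
  induction n with
  | zero => simp
  | succ n ih =>
    have hs : √(n : ℝ) ≤ √((n : ℝ) + 1) := Real.sqrt_le_sqrt (by linarith)
    have hsq : √((n : ℝ) + 1) ^ 2 = n + 1 := Real.sq_sqrt (by positivity)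
    have hs1 : 1 ≤ √((n : ℝ) + 1) := Real.one_le_sqrt.mpr (by linarith)
    have hstep : 1 / ((n : ℝ) + 1) ≤ 2 * (√((n : ℝ) + 1) - √n) := by
      rw [div_le_iff₀ (by positivity)]
      nlinarith [Real.sqrt_nonneg (n : ℝ), Real.sq_sqrt (Nat.cast_nonneg (α := ℝ) n)]
    rw [harmonic_succ]
    push_cast
    rw [← one_div]
    linarith

theorem summable_one_div_mul_sqrt : Summable fun k : ℕ => 1 / ((k + 1 : ℝ) * √(k + 1)) := by
  have h := (summable_nat_add_iff 1).mpr
    (Real.summable_one_div_nat_rpow.mpr (by norm_num : (1 : ℝ) < 3 / 2))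
  refine h.congr fun k => ?_
  have hk : (0 : ℝ) < k + 1 := by positivity
  push_cast
  rw [Real.sqrt_eq_rpow, show (3 / 2 : ℝ) = 1 + 1 / 2 by norm_num, Real.rpow_add hk, Real.rpow_one]

section PerturbationOfIdentity

variable {E : Type*} [NormedAddCommGroup E] {g : E → E} {K : ℝ≥0}

theorem injOn_add_of_lipschitzOnWith {s : Set E} (hK : K < 1) (hg : LipschitzOnWith K g s) :
    InjOn (fun x => x + g x) s := by
  intro x hx y hy hxy
  have hle : ‖x - y‖ ≤ K * ‖x - y‖ := by
    calc ‖x - y‖ = ‖g y - g x‖ := by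
          rw [sub_eq_sub_iff_add_eq_add.mpr (by rw [add_comm (g y)]; exact hxy)]
      _ ≤ K * ‖y - x‖ := hg.norm_sub_le hy hx
      _ = K * ‖x - y‖ := by rw [norm_sub_rev]
  have hK' : (K : ℝ) < 1 := by exact_mod_cast hK
  have : ‖x - y‖ = 0 := by nlinarith [norm_nonneg (x - y)]
  exact sub_eq_zero.mp (norm_eq_zero.mp this)

theorem exists_add_eq_of_lipschitzOnWith [CompleteSpace E] {τ : E} {r : ℝ} (hK : K < 1)
    (hg : LipschitzOnWith K g (closedBall τ r)) (hr : 0 ≤ r)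
    (hbound : ∀ u ∈ closedBall τ r, ‖g u‖ ≤ r) : ∃ w ∈ closedBall τ r, w + g w = τ := by
  have hmaps : MapsTo (fun u => τ - g u) (closedBall τ r) (closedBall τ r) := fun u hu => by
    rw [mem_closedBall, dist_eq_norm, sub_sub_cancel_left, norm_neg]
    exact hbound u hu
  have hcontr : ContractingWith K (hmaps.restrict _ _ _) := by
    refine ⟨hK, LipschitzWith.of_dist_le_mul fun u v => ?_⟩
    simp only [Subtype.dist_eq, MapsTo.val_restrict_apply, dist_eq_norm, sub_sub_sub_cancel_left]
    exact hg.norm_sub_le v.2 u.2 |>.trans_eq (by rw [norm_sub_rev])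
  obtain ⟨w, hw, hfix, -⟩ := hcontr.exists_fixedPoint' isClosed_closedBall.isComplete hmaps
    (mem_closedBall_self hr) (edist_ne_top _ _)
  exact ⟨w, hw, eq_sub_iff_add_eq.mp hfix.eq.symm⟩

end PerturbationOfIdentity

namespace ParabolicQuadratic

theorem Q_one_eq_mul (z : ℂ) : Q 1 z = z * (1 + z) := by
  simp only [Q]
  ring

theorem hasDerivAt_Q (lam z : ℂ) : HasDerivAt (Q lam) (lam + 2 * z) z := by
  have h : HasDerivAt (fun w => lam * w + w ^ 2) (lam * 1 + 2 * z ^ 1) z :=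
    ((hasDerivAt_id' z).const_mul lam).add (hasDerivAt_pow 2 z)
  exact h.congr_deriv (by ring)

theorem differentiable_Q (lam : ℂ) : Differentiable ℂ (Q lam) :=
  fun z => (hasDerivAt_Q lam z).differentiableAt

theorem hasDerivAt_Q_iterate (lam : ℂ) (n : ℕ) (z : ℂ) :
    HasDerivAt (Q lam)^[n] (∏ k ∈ Finset.range n, (lam + 2 * (Q lam)^[k] z)) z := by
  induction n with
  | zero => simpa using hasDerivAt_id z
  | succ n ih =>
    rw [Function.iterate_succ', Finset.prod_range_succ, mul_comm]
    exact (hasDerivAt_Q lam _).comp z ih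

theorem Q_surjective (lam : ℂ) : Function.Surjective (Q lam) := by
  intro y
  obtain ⟨s, hs⟩ := IsAlgClosed.exists_pow_nat_eq (y + lam ^ 2 / 4) two_pos
  exact ⟨s - lam / 2, by rw [Q]; linear_combination hs⟩

theorem isOpenMap_Q (lam : ℂ) : IsOpenMap (Q lam) := by
  have hanalytic := Complex.analyticOnNhd_univ_iff_differentiable.mpr (differentiable_Q lam)
  rcases hanalytic.is_constant_or_isOpen isPreconnected_univ with ⟨c, hc⟩ | h
  · have h1 := (hc 1 trivial).trans (hc (-1) trivial).symm
    have h0 := (hc 1 trivial).trans (hc 0 trivial).symm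
    simp only [Q] at h0 h1
    have : (2 : ℂ) = 0 := by linear_combination 2 * h0 - h1
    norm_num at this
  · exact fun s hs => h s (subset_univ s) hs

theorem Q_mem_filledJulia_iff {lam z : ℂ} : Q lam z ∈ filledJulia lam ↔ z ∈ filledJulia lam := by
  constructor
  · rintro ⟨M, hM⟩
    refine ⟨max M ‖z‖, fun n => ?_⟩
    cases n with
    | zero => exact le_max_right _ _
    | succ n => exact (Function.iterate_succ_apply _ n z ▸ hM n).trans (le_max_left _ _)
  · rintro ⟨M, hM⟩
    exact ⟨M, fun n => Function.iterate_succ_apply _ n z ▸ hM (n + 1)⟩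

theorem iterate_mem_filledJulia {lam z : ℂ} (hz : z ∈ filledJulia lam) (n : ℕ) :
    (Q lam)^[n] z ∈ filledJulia lam := by
  induction n with
  | zero => exact hz
  | succ n ih => rw [Function.iterate_succ_apply']; exact Q_mem_filledJulia_iff.mpr ih

theorem Q_mem_interior_filledJulia_iff {lam z : ℂ} :
    Q lam z ∈ interior (filledJulia lam) ↔ z ∈ interior (filledJulia lam) := by
  constructor
  · intro hz
    exact interior_maximal (fun x hx => Q_mem_filledJulia_iff.mp (interior_subset hx))
      (isOpen_interior.preimage (differentiable_Q lam).continuous) hz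
  · intro hz
    refine interior_maximal ?_ (isOpenMap_Q lam _ isOpen_interior) (mem_image_of_mem _ hz)
    rintro _ ⟨x, hx, rfl⟩
    exact Q_mem_filledJulia_iff.mpr (interior_subset hx)

theorem iterate_mem_interior_filledJulia {lam z : ℂ} (hz : z ∈ interior (filledJulia lam)) (n : ℕ) :
    (Q lam)^[n] z ∈ interior (filledJulia lam) := by
  induction n with
  | zero => exact hz
  | succ n ih => rw [Function.iterate_succ_apply']; exact Q_mem_interior_filledJulia_iff.mpr ih

theorem exists_iterate_preimage_mem_interior {lam y : ℂ} (hy : y ∈ interior (filledJulia lam))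
    (n : ℕ) : ∃ x ∈ interior (filledJulia lam), (Q lam)^[n] x = y := by
  induction n with
  | zero => exact ⟨y, hy, rfl⟩
  | succ n ih =>
    obtain ⟨x, hx, rfl⟩ := ih
    obtain ⟨x', rfl⟩ := Q_surjective lam x
    exact ⟨x', Q_mem_interior_filledJulia_iff.mp hx, Function.iterate_succ_apply _ n x'⟩

theorem notMem_filledJulia_of_linear_growth {lam z : ℂ} {c : ℝ} (hc : 0 < c)
    (h : ∀ n : ℕ, c * n ≤ ‖(Q lam)^[n] z‖) : z ∉ filledJulia lam := by
  rintro ⟨M, hM⟩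
  obtain ⟨n, hn⟩ := exists_nat_gt (M / c)
  rw [div_lt_iff₀ hc] at hn
  linarith [h n, hM n]

theorem notMem_filledJulia_one_of_two_lt_norm {z : ℂ} (hz : 2 < ‖z‖) : z ∉ filledJulia 1 := by
  set d := ‖z‖ - 2
  have hd : 0 < d := sub_pos.mpr hz
  -- `‖Q z‖ - 2 ≥ ‖z‖ (‖z‖ - 1) - 2 = (‖z‖ - 2) (‖z‖ + 1)` triples the excess over `2`.
  have hgrowth : ∀ n : ℕ, 2 + (n + 1) * d ≤ ‖(Q 1)^[n] z‖ := by
    intro n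
    induction n with
    | zero => simp [d]
    | succ n ih =>
      rw [Function.iterate_succ_apply']
      set y := (Q 1)^[n] z
      have hy : ‖y‖ - 1 ≤ ‖1 + y‖ := by
        have := norm_sub_norm_le y (-1); rw [sub_neg_eq_add, add_comm] at this; simpa using this
      have hQ : ‖y‖ * (‖y‖ - 1) ≤ ‖Q 1 y‖ := by
        rw [Q_one_eq_mul, norm_mul]
        exact mul_le_mul_of_nonneg_left hy (norm_nonneg y)
      have hnd : 0 ≤ (n + 1) * d := by positivity
      push_cast
      nlinarith [mul_nonneg hnd (show 0 ≤ ‖y‖ - 2 by nlinarith)]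
  refine notMem_filledJulia_of_linear_growth hd fun n => ?_
  nlinarith [hgrowth n]

theorem norm_le_two_of_mem_filledJulia_one {z : ℂ} (hz : z ∈ filledJulia 1) : ‖z‖ ≤ 2 :=
  not_lt.mp fun h => notMem_filledJulia_one_of_two_lt_norm h hz

theorem ofReal_notMem_filledJulia_one {t : ℝ} (ht : 0 < t) : (t : ℂ) ∉ filledJulia 1 := by
  have horbit : ∀ n : ℕ, ∃ x : ℝ, t + n * t ^ 2 ≤ x ∧ (Q 1)^[n] (t : ℂ) = x := by
    intro n
    induction n with
    | zero => exact ⟨t, by simp, rfl⟩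
    | succ n ih =>
      obtain ⟨x, hx, hxeq⟩ := ih
      refine ⟨x + x ^ 2, ?_, ?_⟩
      · have : t ≤ x := by nlinarith
        push_cast
        nlinarith
      · rw [Function.iterate_succ_apply', hxeq, Q]
        push_cast
        ring
  refine notMem_filledJulia_of_linear_growth (pow_pos ht 2) fun n => ?_
  obtain ⟨x, hx, hxeq⟩ := horbit n
  rw [hxeq, Complex.norm_real, Real.norm_eq_abs]
  nlinarith [le_abs_self x]

theorem zero_notMem_interior_filledJulia_one : (0 : ℂ) ∉ interior (filledJulia 1) := by
  intro h
  obtain ⟨ε, hε, hball⟩ := Metric.isOpen_iff.mp isOpen_interior 0 h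
  refine ofReal_notMem_filledJulia_one (half_pos hε) (interior_subset (hball ?_))
  rw [mem_ball_zero_iff, Complex.norm_real, Real.norm_of_nonneg (half_pos hε).le]
  exact half_lt_self hε

theorem iterate_ne_zero {z : ℂ} (hz : z ∈ interior (filledJulia 1)) (n : ℕ) :
    (Q 1)^[n] z ≠ 0 := fun h =>
  zero_notMem_interior_filledJulia_one (h ▸ iterate_mem_interior_filledJulia hz n)

theorem iterate_ne_neg_one {z : ℂ} (hz : z ∈ interior (filledJulia 1)) (n : ℕ) :
    (Q 1)^[n] z ≠ -1 := by
  intro h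
  have h0 := iterate_ne_zero hz (n + 1)
  rw [Function.iterate_succ_apply', h, Q] at h0
  norm_num at h0

/-- `Q 1` in the coordinate `w = -1/z`. -/
noncomputable def qConj (w : ℂ) : ℂ := w + 1 + (w - 1)⁻¹

def halfPlane : Set ℂ := {w | 100 < w.re}

def petal : Set ℂ := {z | -z⁻¹ ∈ halfPlane}

theorem neg_inv_Q_one {z : ℂ} (hz : z ≠ -1) : -(Q 1 z)⁻¹ = qConj (-z⁻¹) := by
  rcases eq_or_ne z 0 with rfl | h0
  · simp [Q, qConj]
  have h1 : 1 + z ≠ 0 := fun h => hz (by linear_combination h)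
  have h2 : -z⁻¹ - 1 = -((1 + z) / z) := by field_simp; ring
  rw [qConj, h2, Q_one_eq_mul]
  field_simp
  ring

theorem re_add_one_le_re_qConj {w : ℂ} (hw : 1 ≤ w.re) : w.re + 1 ≤ (qConj w).re := by
  have h : 0 ≤ ((w - 1)⁻¹).re := by
    rw [Complex.inv_re]
    exact div_nonneg (by simpa using hw) (Complex.normSq_nonneg _)
  simp only [qConj, Complex.add_re, Complex.one_re]
  linarith

theorem re_add_half_le_re_qConj {w : ℂ} (hw : 2 ≤ ‖w - 1‖) : w.re + 1 / 2 ≤ (qConj w).re := by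
  have h : ‖(w - 1)⁻¹‖ ≤ 1 / 2 := by
    rw [norm_inv]; exact inv_le_of_inv_le₀ (by norm_num) (by linarith)
  have := neg_le_of_abs_le ((Complex.abs_re_le_norm _).trans h)
  simp only [qConj, Complex.add_re, Complex.one_re]
  linarith

theorem isOpen_halfPlane : IsOpen halfPlane := isOpen_lt continuous_const Complex.continuous_re

theorem convex_halfPlane : Convex ℝ halfPlane := convex_halfSpace_re_gt 100

theorem re_qConj_iterate {w : ℂ} (hw : w ∈ halfPlane) (k : ℕ) :
    100 + k / 2 < (qConj^[k] w).re := by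
  induction k with
  | zero => simpa [halfPlane] using hw
  | succ k ih =>
    have hnorm : 2 ≤ ‖qConj^[k] w - 1‖ := by
      refine le_trans ?_ (Complex.re_le_norm _)
      simp only [Complex.sub_re, Complex.one_re]
      linarith [(by positivity : (0 : ℝ) ≤ k / 2)]
    rw [Function.iterate_succ_apply']
    push_cast
    linarith [re_add_half_le_re_qConj hnorm]

theorem qConj_iterate_mem_halfPlane {w : ℂ} (hw : w ∈ halfPlane) (k : ℕ) :
    qConj^[k] w ∈ halfPlane :=
  lt_of_le_of_lt (by simp; positivity) (re_qConj_iterate hw k)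

theorem le_norm_qConj_iterate_sub_one {w : ℂ} (hw : w ∈ halfPlane) (k : ℕ) :
    (k + 198) / 2 ≤ ‖qConj^[k] w - 1‖ := by
  refine le_trans ?_ (Complex.re_le_norm _)
  simp only [Complex.sub_re, Complex.one_re]
  linarith [re_qConj_iterate hw k]

theorem qConj_iterate_sub_one_ne_zero {w : ℂ} (hw : w ∈ halfPlane) (k : ℕ) :
    qConj^[k] w - 1 ≠ 0 :=
  norm_pos_iff.mp <| lt_of_lt_of_le (by positivity) (le_norm_qConj_iterate_sub_one hw k)

theorem ne_zero_of_mem_petal {z : ℂ} (hz : z ∈ petal) : z ≠ 0 := by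
  rintro rfl
  norm_num [petal, halfPlane] at hz

theorem ne_neg_one_of_mem_petal {z : ℂ} (hz : z ∈ petal) : z ≠ -1 := by
  rintro rfl
  norm_num [petal, halfPlane] at hz

theorem neg_inv_Q_one_iterate_of_mem_petal {z : ℂ} (hz : z ∈ petal) (k : ℕ) :
    (Q 1)^[k] z ∈ petal ∧ -((Q 1)^[k] z)⁻¹ = qConj^[k] (-z⁻¹) := by
  induction k with
  | zero => exact ⟨hz, rfl⟩
  | succ k ih =>
    have e : -((Q 1)^[k + 1] z)⁻¹ = qConj^[k + 1] (-z⁻¹) := by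
      rw [Function.iterate_succ_apply', Function.iterate_succ_apply',
        neg_inv_Q_one (ne_neg_one_of_mem_petal ih.1), ih.2]
    exact ⟨show -_ ∈ halfPlane from e ▸ qConj_iterate_mem_halfPlane hz (k + 1), e⟩

theorem mapsTo_Q_one_petal : MapsTo (Q 1) petal petal := fun _ hz =>
  (neg_inv_Q_one_iterate_of_mem_petal hz 1).1

theorem isOpen_petal : IsOpen petal := by
  have : petal = {0}ᶜ ∩ (fun z : ℂ => -z⁻¹) ⁻¹' halfPlane := by
    ext z
    exact ⟨fun hz => ⟨ne_zero_of_mem_petal hz, hz⟩, fun hz => hz.2⟩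
  rw [this]
  exact ContinuousOn.isOpen_inter_preimage
    (fun _ hz => (continuousAt_inv₀ hz).neg.continuousWithinAt) isOpen_compl_singleton
    isOpen_halfPlane

theorem petal_nonempty : petal.Nonempty :=
  ⟨-(101 : ℂ)⁻¹, by norm_num [petal, halfPlane]⟩

theorem norm_le_of_mem_petal {z : ℂ} (hz : z ∈ petal) : ‖z‖ ≤ 1 := by
  have h : 1 ≤ ‖z⁻¹‖ := by
    rw [← norm_neg]; exact le_trans (by norm_num) ((le_of_lt hz).trans (Complex.re_le_norm _))
  rw [norm_inv] at h
  exact (one_le_inv₀ (norm_pos_iff.mpr (ne_zero_of_mem_petal hz))).mp h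

theorem petal_subset_interior_filledJulia : petal ⊆ interior (filledJulia 1) :=
  interior_maximal (fun _ hz => ⟨1, fun n => norm_le_of_mem_petal
    (neg_inv_Q_one_iterate_of_mem_petal hz n).1⟩) isOpen_petal

theorem norm_deriv_Q_one_iterate_le {z : ℂ} {r : ℝ} (hr : 0 < r) (hball : ball z r ⊆ filledJulia 1)
    (n : ℕ) : ‖∏ k ∈ Finset.range n, (1 + 2 * (Q 1)^[k] z)‖ ≤ 4 / r := by
  have hbound {x : ℂ} (hx : x ∈ ball z r) : ‖(Q 1)^[n] x‖ ≤ 2 :=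
    norm_le_two_of_mem_filledJulia_one (iterate_mem_filledJulia (hball hx) n)
  have hmaps : MapsTo (Q 1)^[n] (ball z r) (closedBall ((Q 1)^[n] z) 4) := fun x hx => by
    rw [mem_closedBall, dist_eq_norm]
    linarith [norm_sub_le ((Q 1)^[n] x) ((Q 1)^[n] z), hbound hx, hbound (mem_ball_self hr)]
  rw [← (hasDerivAt_Q_iterate 1 n z).deriv]
  exact Complex.norm_deriv_le_div_of_mapsTo_ball
    ((differentiable_Q 1).iterate n).differentiableOn hmaps hr

theorem one_le_re_neg_inv {z : ℂ} (hz : z ≠ 0) (h : ‖1 + 2 * z‖ ≤ 1) : 1 ≤ (-z⁻¹).re := by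
  have hsq : Complex.normSq (1 + 2 * z) ≤ 1 := by
    rw [Complex.normSq_eq_norm_sq]; nlinarith [norm_nonneg (1 + 2 * z)]
  have hkey : Complex.normSq z + z.re ≤ 0 := by
    simp only [Complex.normSq_apply, Complex.add_re, Complex.add_im, Complex.one_re,
      Complex.one_im, Complex.mul_re, Complex.mul_im] at hsq ⊢
    norm_num at hsq
    nlinarith
  rw [Complex.neg_re, Complex.inv_re, le_neg, div_le_iff₀ (Complex.normSq_pos.mpr hz)]
  linarith

theorem one_le_norm_add_norm_add_one (z : ℂ) : 1 ≤ ‖z‖ + ‖z + 1‖ := by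
  have h := norm_sub_le (z + 1) z
  rw [add_sub_cancel_left, norm_one] at h
  linarith

theorem norm_le_or_norm_add_one_le {z : ℂ} (h : ‖1 + 2 * z‖ ≤ 1 + 1 / 40000)
    (hQ : 1 ≤ ‖1 + 2 * Q 1 z‖) : ‖z‖ ≤ 1 / 100 ∨ ‖z + 1‖ ≤ 1 / 100 := by
  set b := 1 + 2 * z
  have hb2 : ‖b ^ 2‖ ≤ (1 + 1 / 40000) ^ 2 := by
    rw [norm_pow]; exact pow_le_pow_left₀ (norm_nonneg b) h 2
  have hplus : 2 ≤ ‖b ^ 2 + 1‖ := by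
    rw [show b ^ 2 + 1 = 2 * (1 + 2 * Q 1 z) by simp only [b, Q]; ring, norm_mul]
    norm_num
    linarith
  -- By the parallelogram law, `b²` near the unit circle with `|b² + 1| ≥ 2` forces `b² ≈ 1`.
  have hminus : ‖b ^ 2 - 1‖ ≤ 1 / 50 := by
    have hpar := parallelogram_law_with_norm ℝ (b ^ 2) 1
    rw [norm_one] at hpar
    have : ‖b ^ 2 - 1‖ ^ 2 ≤ (1 / 50) ^ 2 := by nlinarith [norm_nonneg (b ^ 2)]
    exact (pow_le_pow_iff_left₀ (norm_nonneg _) (by norm_num) two_ne_zero).mp this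
  have hprod : ‖z‖ * ‖z + 1‖ ≤ 1 / 200 := by
    rw [← norm_mul, show z * (z + 1) = (b ^ 2 - 1) / 4 by simp only [b]; ring, norm_div]
    norm_num
    linarith
  have hsum := one_le_norm_add_norm_add_one z
  rcases le_total ‖z‖ ‖z + 1‖ with hle | hle
  · left; nlinarith [norm_nonneg z]
  · right; nlinarith [norm_nonneg (z + 1)]

theorem norm_Q_one_le {z : ℂ} (h2 : ‖z‖ ≤ 2) (h : ‖z‖ ≤ 1 / 100 ∨ ‖z + 1‖ ≤ 1 / 100) :
    ‖Q 1 z‖ ≤ 1 / 50 := by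
  rw [Q_one_eq_mul, norm_mul, add_comm 1 z]
  rcases h with h | h
  · nlinarith [norm_add_le z 1, norm_one (α := ℂ), norm_nonneg z]
  · nlinarith [norm_nonneg z, norm_nonneg (z + 1)]

theorem re_neg_inv_add_half_le {z : ℂ} (h0 : z ≠ 0) (h : ‖z‖ ≤ 1 / 100) :
    (-z⁻¹).re + 1 / 2 ≤ (-(Q 1 z)⁻¹).re := by
  have hne : z ≠ -1 := by rintro rfl; norm_num at h
  rw [neg_inv_Q_one hne]
  refine re_add_half_le_re_qConj ?_
  have hinv : 100 ≤ ‖-z⁻¹‖ := by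
    rw [norm_neg, norm_inv]
    exact (le_inv_comm₀ (by norm_num) (norm_pos_iff.mpr h0)).mpr (by linarith)
  linarith [norm_sub_norm_le (-z⁻¹) 1, norm_one (α := ℂ)]

theorem neg_inv_Q_one_iterate_succ {z : ℂ} (hz : z ∈ interior (filledJulia 1)) (n : ℕ) :
    -((Q 1)^[n + 1] z)⁻¹ = qConj (-((Q 1)^[n] z)⁻¹) := by
  rw [Function.iterate_succ_apply', neg_inv_Q_one (iterate_ne_neg_one hz n)]

theorem exists_iterate_mem_petal_of_norm_deriv_le_one {z : ℂ} (hz : z ∈ interior (filledJulia 1))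
    (h : ‖1 + 2 * z‖ ≤ 1) : ∃ n, (Q 1)^[n] z ∈ petal := by
  have hclimb : ∀ n, 1 ≤ (-((Q 1)^[n] z)⁻¹).re ∧
      (-((Q 1)^[n] z)⁻¹).re + 1 ≤ (-((Q 1)^[n + 1] z)⁻¹).re := by
    intro n
    induction n with
    | zero =>
      have h1 := one_le_re_neg_inv (iterate_ne_zero hz 0) h
      exact ⟨h1, neg_inv_Q_one_iterate_succ hz 0 ▸ re_add_one_le_re_qConj h1⟩
    | succ n ih =>
      have h1 : 1 ≤ (-((Q 1)^[n + 1] z)⁻¹).re := by linarith [ih.1, ih.2]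
      exact ⟨h1, neg_inv_Q_one_iterate_succ hz (n + 1) ▸ re_add_one_le_re_qConj h1⟩
  exact exists_lt_of_forall_add_le_succ one_pos (fun n => (hclimb n).2) 100

theorem tendsto_norm_deriv_Q_one_iterate {z : ℂ} (hz : z ∈ interior (filledJulia 1))
    (h : ∀ k, 1 ≤ ‖1 + 2 * (Q 1)^[k] z‖) :
    Tendsto (fun k => ‖1 + 2 * (Q 1)^[k] z‖ - 1) atTop (𝓝 0) := by
  obtain ⟨r, hr, hball⟩ := Metric.mem_nhds_iff.mp (mem_interior_iff_mem_nhds.mp hz)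
  set x : ℕ → ℝ := fun k => ‖1 + 2 * (Q 1)^[k] z‖ - 1
  have hx0 : ∀ k, 0 ≤ x k := fun k => sub_nonneg.mpr (h k)
  -- The derivatives `∏ (1 + x k)` of the iterates are bounded, so `∑ x k` converges.
  have hsum : ∀ n, ∑ k ∈ Finset.range n, x k ≤ 4 / r := fun n => by
    have hprod := norm_deriv_Q_one_iterate_le hr hball n
    rw [norm_prod] at hprod
    have := (Finset.range n).one_add_sum_le_prod_one_add (f := x) fun k _ => hx0 k
    simp only [x, add_sub_cancel] at this
    linarith
  exact (summable_of_sum_range_le hx0 hsum).tendsto_atTop_zero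

theorem exists_iterate_mem_petal_of_one_lt_norm_deriv {z : ℂ}
    (hz : z ∈ interior (filledJulia 1)) (h : ∀ k, 1 < ‖1 + 2 * (Q 1)^[k] z‖) :
    ∃ n, (Q 1)^[n] z ∈ petal := by
  obtain ⟨N, hN⟩ := eventually_atTop.mp <|
    (tendsto_norm_deriv_Q_one_iterate hz fun k => (h k).le).eventually
      (gt_mem_nhds (by norm_num : (0 : ℝ) < 1 / 40000))
  have hdich : ∀ k ≥ N, ‖(Q 1)^[k] z‖ ≤ 1 / 100 ∨ ‖(Q 1)^[k] z + 1‖ ≤ 1 / 100 := fun k hk =>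
    norm_le_or_norm_add_one_le (by linarith [hN k hk])
      (Function.iterate_succ_apply' (Q 1) k z ▸ (h (k + 1)).le)
  -- An orbit point near `-1` is mapped next to `0`, so from `N + 1` on the orbit stays near `0`.
  have hsmall : ∀ k ≥ N, ‖(Q 1)^[k + 1] z‖ ≤ 1 / 100 := fun k hk => by
    have h50 : ‖(Q 1)^[k + 1] z‖ ≤ 1 / 50 := by
      rw [Function.iterate_succ_apply']
      exact norm_Q_one_le (norm_le_two_of_mem_filledJulia_one
        (iterate_mem_filledJulia (interior_subset hz) k)) (hdich k hk)
    refine (hdich (k + 1) (by omega)).resolve_right fun h' => ?_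
    linarith [one_le_norm_add_norm_add_one ((Q 1)^[k + 1] z)]
  obtain ⟨n, hn⟩ := exists_lt_of_forall_add_le_succ (x := fun n => (-((Q 1)^[N + 1 + n] z)⁻¹).re)
    one_half_pos (fun n => by
      rw [show N + 1 + (n + 1) = N + 1 + n + 1 by ring, Function.iterate_succ_apply']
      refine re_neg_inv_add_half_le (iterate_ne_zero hz _) ?_
      simpa only [add_right_comm] using hsmall (N + n) (by omega)) 100
  exact ⟨N + 1 + n, hn⟩

theorem exists_iterate_mem_petal {z : ℂ} (hz : z ∈ interior (filledJulia 1)) :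
    ∃ n, (Q 1)^[n] z ∈ petal := by
  by_cases h : ∃ k, ‖1 + 2 * (Q 1)^[k] z‖ ≤ 1
  · obtain ⟨k, hk⟩ := h
    obtain ⟨n, hn⟩ := exists_iterate_mem_petal_of_norm_deriv_le_one
      (iterate_mem_interior_filledJulia hz k) hk
    exact ⟨n + k, by rwa [Function.iterate_add_apply]⟩
  · push Not at h
    exact exists_iterate_mem_petal_of_one_lt_norm_deriv hz h

noncomputable def fatouTerm (k : ℕ) (w : ℂ) : ℂ := (qConj^[k] w - 1)⁻¹ - ((k : ℂ) + 1)⁻¹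

/-- The Fatou coordinate in the coordinate `w = -1/z` is `w + fatouCorrection w`. -/
noncomputable def fatouCorrection (w : ℂ) : ℂ := ∑' k, fatouTerm k w

theorem qConj_iterate_eq (n : ℕ) (w : ℂ) :
    qConj^[n] w = w + n + ∑ k ∈ Finset.range n, (qConj^[k] w - 1)⁻¹ := by
  induction n with
  | zero => simp
  | succ n ih =>
    rw [Function.iterate_succ_apply', qConj, Finset.sum_range_succ]
    generalize (qConj^[n] w - 1)⁻¹ = u
    rw [ih]
    push_cast
    ring

theorem norm_inv_qConj_iterate_sub_one_le {w : ℂ} (hw : w ∈ halfPlane) (k : ℕ) :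
    ‖(qConj^[k] w - 1)⁻¹‖ ≤ 2 / (k + 198) := by
  rw [norm_inv, ← inv_div]
  exact inv_anti₀ (by positivity) (le_norm_qConj_iterate_sub_one hw k)

theorem norm_qConj_iterate_sub_le {w : ℂ} (hw : w ∈ halfPlane) {C : ℝ} (hC : ‖w‖ ≤ C) (k : ℕ) :
    ‖(k + 2) - qConj^[k] w‖ ≤ C + 2 + 4 * √k := by
  have hsum : ‖∑ j ∈ Finset.range k, (qConj^[j] w - 1)⁻¹‖ ≤ 2 * harmonic k := by
    refine (norm_sum_le _ _).trans ?_
    rw [harmonic, Rat.cast_sum, Finset.mul_sum]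
    refine Finset.sum_le_sum fun j _ => (norm_inv_qConj_iterate_sub_one_le hw j).trans ?_
    push_cast
    rw [← div_eq_mul_inv]
    exact div_le_div_of_nonneg_left zero_le_two (by positivity) (by linarith)
  have h2w : ‖(2 : ℂ) - w‖ ≤ 2 + C := by
    refine (norm_sub_le _ _).trans ?_
    norm_num
    exact hC
  rw [qConj_iterate_eq, show (k + 2 : ℂ) - (w + k + ∑ j ∈ Finset.range k, (qConj^[j] w - 1)⁻¹)
    = 2 - w - ∑ j ∈ Finset.range k, (qConj^[j] w - 1)⁻¹ by ring]
  linarith [norm_sub_le (2 - w) (∑ j ∈ Finset.range k, (qConj^[j] w - 1)⁻¹),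
    harmonic_le_two_mul_sqrt k]

theorem norm_fatouTerm_le {w : ℂ} (hw : w ∈ halfPlane) {C : ℝ} (hC : ‖w‖ ≤ C) (k : ℕ) :
    ‖fatouTerm k w‖ ≤ (2 * C + 12) * (1 / ((k + 1) * √(k + 1))) := by
  set W := qConj^[k] w
  have hW : W - 1 ≠ 0 := qConj_iterate_sub_one_ne_zero hw k
  have hk : (k : ℂ) + 1 ≠ 0 := by exact_mod_cast Nat.succ_ne_zero k
  have hterm : fatouTerm k w = ((k + 2) - W) * (W - 1)⁻¹ * ((k : ℂ) + 1)⁻¹ := by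
    change (W - 1)⁻¹ - _ = _
    field_simp
    ring
  have hnum := norm_qConj_iterate_sub_le hw hC k
  have hWk : ‖(W - 1)⁻¹‖ ≤ 2 / (k + 1) :=
    (norm_inv_qConj_iterate_sub_one_le hw k).trans
      (div_le_div_of_nonneg_left zero_le_two (by positivity) (by linarith))
  have hk' : ‖((k : ℂ) + 1)⁻¹‖ = 1 / (k + 1) := by
    rw [norm_inv, one_div]; congr 1; exact_mod_cast Complex.norm_natCast (k + 1)
  set s := √((k : ℝ) + 1)
  have hs1 : 1 ≤ s := Real.one_le_sqrt.mpr (by linarith [(Nat.cast_nonneg k : (0 : ℝ) ≤ k)])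
  have hs2 : s ^ 2 = k + 1 := Real.sq_sqrt (by positivity)
  have hks : √(k : ℝ) ≤ s := Real.sqrt_le_sqrt (by linarith)
  have hC0 : 0 ≤ C := (norm_nonneg w).trans hC
  rw [hterm, norm_mul, norm_mul, hk']
  calc ‖(k + 2 : ℂ) - W‖ * ‖(W - 1)⁻¹‖ * (1 / (k + 1))
      ≤ (C + 2 + 4 * s) * (2 / s ^ 2) * (1 / s ^ 2) := by
        rw [hs2]
        gcongr
        linarith
    _ ≤ (2 * C + 12) * (1 / ((k + 1) * s)) := by
        rw [← hs2]
        field_simp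
        nlinarith [mul_nonneg hC0 (sub_nonneg.mpr hs1)]

theorem summable_fatouTerm {w : ℂ} (hw : w ∈ halfPlane) : Summable fun k => fatouTerm k w :=
  (summable_one_div_mul_sqrt.mul_left _).of_norm_bounded (norm_fatouTerm_le hw le_rfl)

theorem hasDerivAt_qConj {u : ℂ} (hu : u - 1 ≠ 0) :
    HasDerivAt qConj (1 - ((u - 1) ^ 2)⁻¹) u := by
  have h := ((hasDerivAt_id' u).add_const 1).add (((hasDerivAt_id' u).sub_const 1).inv hu)
  exact h.congr_deriv (by field_simp; ring)

theorem hasDerivAt_qConj_iterate {w : ℂ} (hw : w ∈ halfPlane) (k : ℕ) :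
    HasDerivAt qConj^[k] (∏ j ∈ Finset.range k, (1 - ((qConj^[j] w - 1) ^ 2)⁻¹)) w := by
  induction k with
  | zero => simpa using hasDerivAt_id w
  | succ k ih =>
    rw [Function.iterate_succ', Finset.prod_range_succ, mul_comm]
    exact (hasDerivAt_qConj (qConj_iterate_sub_one_ne_zero hw k)).comp w ih

theorem norm_inv_qConj_iterate_sub_one_sq_le {w : ℂ} (hw : w ∈ halfPlane) (k : ℕ) :
    ‖((qConj^[k] w - 1) ^ 2)⁻¹‖ ≤ 4 * (1 / ((k + 197) * (k + 197 + 1))) := by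
  rw [← inv_pow, norm_pow]
  calc ‖(qConj^[k] w - 1)⁻¹‖ ^ 2 ≤ (2 / ((k : ℝ) + 198)) ^ 2 := by
        gcongr; exact norm_inv_qConj_iterate_sub_one_le hw k
    _ ≤ 4 * (1 / (((k : ℝ) + 197) * (k + 197 + 1))) := by
        rw [div_pow, ← div_eq_mul_one_div]
        gcongr
        · norm_num
        · nlinarith

theorem norm_deriv_qConj_iterate_le {w : ℂ} (hw : w ∈ halfPlane) (k : ℕ) :
    ‖∏ j ∈ Finset.range k, (1 - ((qConj^[j] w - 1) ^ 2)⁻¹)‖ ≤ 2 := by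
  have hsum : ∑ j ∈ Finset.range k, ‖-((qConj^[j] w - 1) ^ 2)⁻¹‖ ≤ 4 / 197 := by
    calc ∑ j ∈ Finset.range k, ‖-((qConj^[j] w - 1) ^ 2)⁻¹‖
        ≤ ∑ j ∈ Finset.range k, 4 * (1 / (((j : ℝ) + 197) * (j + 197 + 1))) :=
          Finset.sum_le_sum fun j _ => (norm_neg _).trans_le
            (norm_inv_qConj_iterate_sub_one_sq_le hw j)
      _ ≤ 4 * (1 / 197) := by
          rw [← Finset.mul_sum]; gcongr; exact sum_range_one_div_mul_le (by norm_num) k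
      _ = 4 / 197 := by ring
  have hprod := Finset.norm_prod_one_add_sub_one_le (Finset.range k)
    fun j => -((qConj^[j] w - 1) ^ 2)⁻¹
  have hexp : Real.exp (4 / 197) ≤ 1 / (1 - 4 / 197) :=
    Real.exp_bound_div_one_sub_of_interval (by norm_num) (by norm_num)
  simp only [← sub_eq_add_neg] at hprod
  have := norm_sub_norm_le (∏ j ∈ Finset.range k, (1 - ((qConj^[j] w - 1) ^ 2)⁻¹)) 1
  rw [norm_one] at this
  linarith [Real.exp_le_exp.mpr hsum]

theorem hasDerivAt_fatouTerm {w : ℂ} (hw : w ∈ halfPlane) (k : ℕ) :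
    HasDerivAt (fatouTerm k)
      (-(∏ j ∈ Finset.range k, (1 - ((qConj^[j] w - 1) ^ 2)⁻¹)) / (qConj^[k] w - 1) ^ 2) w :=
  (((hasDerivAt_qConj_iterate hw k).sub_const 1).inv
    (qConj_iterate_sub_one_ne_zero hw k)).sub_const _

theorem norm_fatouTerm_sub_le {w w' : ℂ} (hw : w ∈ halfPlane) (hw' : w' ∈ halfPlane) (k : ℕ) :
    ‖fatouTerm k w - fatouTerm k w'‖ ≤ 8 * (1 / ((k + 197) * (k + 197 + 1))) * ‖w - w'‖ := by
  refine convex_halfPlane.norm_image_sub_le_of_norm_hasDerivWithin_le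
    (fun u hu => (hasDerivAt_fatouTerm hu k).hasDerivWithinAt) (fun u hu => ?_) hw' hw
  rw [norm_div, norm_neg, div_eq_mul_inv, ← norm_inv]
  calc _ ≤ 2 * (4 * (1 / (((k : ℝ) + 197) * (k + 197 + 1)))) :=
        mul_le_mul (norm_deriv_qConj_iterate_le hu k) (norm_inv_qConj_iterate_sub_one_sq_le hu k)
          (norm_nonneg _) zero_le_two
    _ = _ := by ring

theorem lipschitzOnWith_fatouCorrection : LipschitzOnWith (1 / 20) fatouCorrection halfPlane := by
  set a : ℕ → ℝ := fun k => 1 / ((k + 197) * (k + 197 + 1))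
  have ha0 : ∀ k, 0 ≤ a k := fun k => by positivity
  have hsum : ∀ n, ∑ k ∈ Finset.range n, a k ≤ 1 / 197 :=
    sum_range_one_div_mul_le (by norm_num)
  refine LipschitzOnWith.of_dist_le_mul fun w hw w' hw' => ?_
  rw [dist_eq_norm, dist_eq_norm, fatouCorrection, fatouCorrection,
    ← (summable_fatouTerm hw).tsum_sub (summable_fatouTerm hw')]
  have hmaj := ((summable_of_sum_range_le ha0 hsum).mul_left 8).mul_right ‖w - w'‖
  calc ‖∑' k, (fatouTerm k w - fatouTerm k w')‖ ≤ ∑' k, 8 * a k * ‖w - w'‖ :=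
        tsum_of_norm_bounded hmaj.hasSum (norm_fatouTerm_sub_le hw hw')
    _ = 8 * (∑' k, a k) * ‖w - w'‖ := by rw [tsum_mul_right, tsum_mul_left]
    _ ≤ 8 * (1 / 197) * ‖w - w'‖ := by
        gcongr; exact Real.tsum_le_of_sum_range_le ha0 hsum
    _ ≤ ((1 / 20 : ℝ≥0) : ℝ) * ‖w - w'‖ := by
        gcongr; norm_num

theorem differentiableOn_fatouCorrection : DifferentiableOn ℂ fatouCorrection halfPlane := by
  intro w hw
  set U := halfPlane ∩ ball 0 (‖w‖ + 1)
  have hU : IsOpen U := isOpen_halfPlane.inter isOpen_ball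
  have hwU : w ∈ U := ⟨hw, mem_ball_zero_iff.mpr (lt_add_one _)⟩
  have hdiff : DifferentiableOn ℂ fatouCorrection U := by
    refine Complex.differentiableOn_tsum_of_summable_norm (summable_one_div_mul_sqrt.mul_left _)
      (fun k u hu => (hasDerivAt_fatouTerm hu.1 k).differentiableAt.differentiableWithinAt) hU
      (fun k u hu => norm_fatouTerm_le hu.1 (mem_ball_zero_iff.mp hu.2).le k)
  exact (hdiff.differentiableAt (hU.mem_nhds hwU)).differentiableWithinAt

noncomputable def fatouApprox (n : ℕ) (z : ℂ) : ℂ := -((Q 1)^[n] z)⁻¹ - n - harmonic n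

noncomputable def fatouCoord (z : ℂ) : ℂ := limUnder atTop fun n => fatouApprox n z

theorem fatouApprox_eq_of_mem_petal {z : ℂ} (hz : z ∈ petal) (n : ℕ) :
    fatouApprox n z = -z⁻¹ + ∑ k ∈ Finset.range n, fatouTerm k (-z⁻¹) := by
  rw [fatouApprox, (neg_inv_Q_one_iterate_of_mem_petal hz n).2, qConj_iterate_eq]
  simp only [fatouTerm, Finset.sum_sub_distrib, harmonic]
  push_cast
  ring

theorem tendsto_fatouApprox_of_mem_petal {z : ℂ} (hz : z ∈ petal) :
    Tendsto (fatouApprox · z) atTop (𝓝 (-z⁻¹ + fatouCorrection (-z⁻¹))) := by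
  simp_rw [fatouApprox_eq_of_mem_petal hz]
  exact (summable_fatouTerm hz).hasSum.tendsto_sum_nat.const_add _

theorem fatouApprox_Q (n : ℕ) (z : ℂ) :
    fatouApprox n (Q 1 z) = fatouApprox (n + 1) z + 1 + 1 / ((n : ℂ) + 1) := by
  rw [fatouApprox, fatouApprox, ← Function.iterate_succ_apply, harmonic_succ]
  push_cast
  ring

theorem tendsto_fatouApprox_Q_iff {z L : ℂ} :
    Tendsto (fatouApprox · (Q 1 z)) atTop (𝓝 (L + 1)) ↔ Tendsto (fatouApprox · z) atTop (𝓝 L) := by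
  have hε := tendsto_one_div_add_atTop_nhds_zero_nat (𝕜 := ℂ)
  simp_rw [fatouApprox_Q]
  rw [← tendsto_add_atTop_iff_nat 1 (f := fun n => fatouApprox n z)]
  constructor
  · intro h
    simpa using (h.sub hε).sub_const 1
  · intro h
    simpa using (h.add_const 1).add hε

theorem tendsto_fatouApprox_of_iterate_mem_petal {z : ℂ} {m : ℕ} (hm : (Q 1)^[m] z ∈ petal) :
    Tendsto (fatouApprox · z) atTop
      (𝓝 (-((Q 1)^[m] z)⁻¹ + fatouCorrection (-((Q 1)^[m] z)⁻¹) - m)) := by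
  induction m generalizing z with
  | zero => simpa using tendsto_fatouApprox_of_mem_petal hm
  | succ m ih =>
    rw [Function.iterate_succ_apply] at hm ⊢
    refine tendsto_fatouApprox_Q_iff.mp ?_
    convert ih hm using 2
    push_cast
    ring

theorem fatouCoord_eq_of_iterate_mem_petal {z : ℂ} {m : ℕ} (hm : (Q 1)^[m] z ∈ petal) :
    fatouCoord z = -((Q 1)^[m] z)⁻¹ + fatouCorrection (-((Q 1)^[m] z)⁻¹) - m :=
  (tendsto_fatouApprox_of_iterate_mem_petal hm).limUnder_eq

theorem fatouCoord_eq_of_mem_petal {z : ℂ} (hz : z ∈ petal) :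
    fatouCoord z = -z⁻¹ + fatouCorrection (-z⁻¹) :=
  (tendsto_fatouApprox_of_mem_petal hz).limUnder_eq

theorem tendsto_fatouCoord {z : ℂ} (hz : z ∈ interior (filledJulia 1)) :
    Tendsto (fatouApprox · z) atTop (𝓝 (fatouCoord z)) := by
  obtain ⟨m, hm⟩ := exists_iterate_mem_petal hz
  rw [fatouCoord_eq_of_iterate_mem_petal hm]
  exact tendsto_fatouApprox_of_iterate_mem_petal hm

theorem fatouCoord_Q {z : ℂ} (hz : z ∈ interior (filledJulia 1)) :
    fatouCoord (Q 1 z) = fatouCoord z + 1 :=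
  (tendsto_fatouApprox_Q_iff.mpr (tendsto_fatouCoord hz)).limUnder_eq

theorem fatouCoord_iterate {z : ℂ} (hz : z ∈ interior (filledJulia 1)) (n : ℕ) :
    fatouCoord ((Q 1)^[n] z) = fatouCoord z + n := by
  induction n with
  | zero => simp
  | succ n ih =>
    rw [Function.iterate_succ_apply', fatouCoord_Q (iterate_mem_interior_filledJulia hz n), ih]
    push_cast
    ring

theorem differentiableOn_fatouCoord : DifferentiableOn ℂ fatouCoord (interior (filledJulia 1)) := by
  intro z hz
  obtain ⟨m, hm⟩ := exists_iterate_mem_petal hz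
  have hiter : Continuous (Q 1)^[m] := ((differentiable_Q 1).iterate m).continuous
  have hev : fatouCoord =ᶠ[𝓝 z]
      fun y => -((Q 1)^[m] y)⁻¹ + fatouCorrection (-((Q 1)^[m] y)⁻¹) - m :=
    Filter.mem_of_superset ((isOpen_petal.preimage hiter).mem_nhds hm)
      fun y hy => fatouCoord_eq_of_iterate_mem_petal hy
  have hw : DifferentiableAt ℂ (fun y => -((Q 1)^[m] y)⁻¹) z :=
    (((differentiable_Q 1).iterate m).differentiableAt.inv (ne_zero_of_mem_petal hm)).neg
  have hcorr : DifferentiableAt ℂ fatouCorrection (-((Q 1)^[m] z)⁻¹) :=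
    differentiableOn_fatouCorrection.differentiableAt (isOpen_halfPlane.mem_nhds hm)
  exact (hev.differentiableAt_iff.mpr ((hw.add (hcorr.comp z hw)).sub_const _))
    |>.differentiableWithinAt

theorem injOn_fatouCoord : InjOn fatouCoord petal := by
  intro z hz z' hz' h
  rw [fatouCoord_eq_of_mem_petal hz, fatouCoord_eq_of_mem_petal hz'] at h
  simpa using injOn_add_of_lipschitzOnWith (by norm_num) lipschitzOnWith_fatouCorrection hz hz' h

theorem exists_add_fatouCorrection_eq (c : ℂ) :
    ∃ n : ℕ, ∃ w ∈ halfPlane, w + fatouCorrection w = c + n := by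
  set M := ‖fatouCorrection 101‖
  obtain ⟨n, hn⟩ := exists_nat_ge (101 + 2 * M + 2 * ‖c‖)
  set τ := c + n
  set r := τ.re - 101
  have hre : τ.re = c.re + n := by simp [τ]
  have hcre := neg_le_of_abs_le (Complex.abs_re_le_norm c)
  have hM : 0 ≤ M := norm_nonneg _
  have hc0 := norm_nonneg c
  have hτ : ‖τ - 101‖ ≤ ‖c‖ + (n - 101) := by
    rw [show τ - 101 = c + ((n - 101 : ℝ) : ℂ) by push_cast; ring]
    refine (norm_add_le _ _).trans_eq ?_
    rw [Complex.norm_real, Real.norm_of_nonneg (by linarith)]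
  have hball : closedBall τ r ⊆ halfPlane := fun u hu => by
    have := neg_le_of_abs_le
      ((Complex.abs_re_le_norm (u - τ)).trans (mem_closedBall_iff_norm.mp hu))
    rw [Complex.sub_re] at this
    show 100 < u.re
    linarith
  have h101 : (101 : ℂ) ∈ halfPlane := by norm_num [halfPlane]
  have hbound : ∀ u ∈ closedBall τ r, ‖fatouCorrection u‖ ≤ r := fun u hu => by
    have hlip := lipschitzOnWith_fatouCorrection.norm_sub_le (hball hu) h101
    have hu' := mem_closedBall_iff_norm.mp hu
    have htri := norm_sub_le_norm_sub_add_norm_sub u τ 101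
    have hcorr := norm_le_insert' (fatouCorrection u) (fatouCorrection 101)
    push_cast at hlip
    nlinarith
  obtain ⟨w, hw, hwτ⟩ := exists_add_eq_of_lipschitzOnWith (by norm_num)
    (lipschitzOnWith_fatouCorrection.mono hball) (by linarith) hbound
  exact ⟨n, w, hball hw, hwτ⟩

theorem exists_mem_petal_fatouCoord_eq (c : ℂ) : ∃ n : ℕ, ∃ z ∈ petal, fatouCoord z = c + n := by
  obtain ⟨n, w, hw, hwτ⟩ := exists_add_fatouCorrection_eq c
  have hw' : -(-w⁻¹)⁻¹ = w := by rw [inv_neg, inv_inv, neg_neg]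
  have hz : -w⁻¹ ∈ petal := by
    show -(-w⁻¹)⁻¹ ∈ halfPlane
    rwa [hw']
  exact ⟨n, -w⁻¹, hz, by rw [fatouCoord_eq_of_mem_petal hz, hw', hwτ]⟩

theorem image_fatouCoord_interior : fatouCoord '' interior (filledJulia 1) = univ := by
  refine eq_univ_of_forall fun c => ?_
  obtain ⟨n, z, hz, hzc⟩ := exists_mem_petal_fatouCoord_eq c
  obtain ⟨x, hx, rfl⟩ :=
    exists_iterate_preimage_mem_interior (petal_subset_interior_filledJulia hz) n
  exact ⟨x, hx, add_right_cancel (hzc ▸ fatouCoord_iterate hx n).symm⟩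

end ParabolicQuadratic

theorem stmt15 :
    ∃ Ω : Set ℂ, ∃ Φ : ℂ → ℂ,
      IsOpen Ω ∧ Ω.Nonempty ∧ Ω ⊆ interior (filledJulia 1) ∧
      Q 1 '' Ω ⊆ Ω ∧
      DifferentiableOn ℂ Φ (interior (filledJulia 1)) ∧
      Set.InjOn Φ Ω ∧
      (∀ z ∈ interior (filledJulia 1), Φ (Q 1 z) = Φ z + 1) ∧
      (∀ z ∈ interior (filledJulia 1), ∃ n : ℕ, (Q 1)^[n] z ∈ Ω) ∧
      Φ '' interior (filledJulia 1) = Set.univ := by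
  open ParabolicQuadratic in
  exact ⟨petal, fatouCoord, isOpen_petal, petal_nonempty, petal_subset_interior_filledJulia,
    mapsTo_Q_one_petal.image_subset, differentiableOn_fatouCoord, injOn_fatouCoord,
    fun _ hz => fatouCoord_Q hz, fun _ hz => exists_iterate_mem_petal hz,
    image_fatouCoord_interior⟩
end
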